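/- Assume c_f := min_{1≤j≤d} ‖f‖_{H^{-1}(Ω_j)} > 0. Then there exists a sequence of linear subspaces V_n ⊂ H^1_0(Ω) with dim V_n = n and a sequence ε_n → 0 such that ‖u(y) − P_{V_n} u(y)‖_{H^1_0} ≤ ε_n ‖u(y)‖_{H^1_0} for all y ∈ (0,∞]^d, where P_{V_n} is the H^1_0(Ω)-orthogonal projector onto V_n. -/

import Mathlib

/-!
Pass to the compliances `z j = c / y j`, with `c` the smallest finite entry of `y`: this multiplies
the solution by `c`, which does not change relative errors, and puts `z` in the compact set of
`z ∈ [0,1]^d` with some `z j = 1`, where `c_f` bounds the solution away from `0`. The compliance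
`f u(z)` increases with `z`, and `‖u(z') - u(z)‖² ≤ f u(z') - f u(z)` for `z ≤ z' ≤ 1`; so along
`z + (n+1)⁻¹ 1_{z = 0}` the solutions form a Cauchy sequence converging to the stiff solution
`u(z)`, and scaling `z ↦ t z` (which scales `u`) turns this into upper semicontinuity of the
compliance. Together with the energy identity this makes `z ↦ u(z)` continuous on `[0,1]^d`, so
the rescaled solutions form a compact set, whose Kolmogorov widths tend to zero.
-/

open scoped BigOperators ENNReal InnerProductSpace
open Filter

noncomputable section

variable {V : Type*} [NormedAddCommGroup V] [InnerProductSpace ℝ V] [CompleteSpace V]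

/-- The closed subspace `V_S` of functions whose gradient vanishes on `Ω_j` for all `j ∈ S`,
encoded through the local Dirichlet forms `B j v w = ∫_{Ω_j} ∇v·∇w`. -/
def VS {d : ℕ} (B : Fin d → V →L[ℝ] V →L[ℝ] ℝ) (S : Set (Fin d)) : Submodule ℝ V where
  carrier := {v | ∀ j ∈ S, B j v = 0}
  add_mem' := by
    intro a b ha hb j hj
    simp only [Set.mem_setOf_eq] at *
    simp [map_add, ha j hj, hb j hj]
  zero_mem' := by intro j hj; simp
  smul_mem' := by
    intro c a ha j hj
    simp only [Set.mem_setOf_eq] at *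
    simp [map_smul, ha j hj]

/-- The parametric energy bilinear form `a_y(v,w) = Σ_j y_j ∫_{Ω_j} ∇v·∇w`. -/
def aForm {d : ℕ} (B : Fin d → V →L[ℝ] V →L[ℝ] ℝ) (y : Fin d → ℝ) (v w : V) : ℝ :=
  ∑ j, y j * B j v w

/-- The parametric energy norm `‖v‖_y`. -/
def eNorm {d : ℕ} (B : Fin d → V →L[ℝ] V →L[ℝ] ℝ) (y : Fin d → ℝ) (v : V) : ℝ :=
  Real.sqrt (aForm B y v v)

/-- `u` is the weak solution of the diffusion problem with (finite) parameter `y`. -/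
def IsWeakSol {d : ℕ} (B : Fin d → V →L[ℝ] V →L[ℝ] ℝ) (f : V →L[ℝ] ℝ)
    (y : Fin d → ℝ) (u : V) : Prop :=
  ∀ v : V, aForm B y u v = f v

/-- `u` is the (possibly stiff-limit) solution for an extended parameter `y ∈ (0,∞]^d`:
on the set `S = {j | y j = ∞}` of infinite entries, `u ∈ V_S` and `u` solves the
limit variational problem over `V_S`. -/
def IsSolE {d : ℕ} (B : Fin d → V →L[ℝ] V →L[ℝ] ℝ) (f : V →L[ℝ] ℝ)
    (y : Fin d → ℝ≥0∞) (u : V) : Prop :=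
  u ∈ VS B {j | y j = ∞} ∧
  ∀ v ∈ VS B {j | y j = ∞}, ∑ j, (y j).toReal * B j u v = f v

/-- `p` is the `H^1_0`-orthogonal projection of `u` onto `K`. -/
def IsOrthProj (K : Submodule ℝ V) (u p : V) : Prop :=
  p ∈ K ∧ ∀ w ∈ K, ⟪u - p, w⟫_ℝ = 0

/-- `p` is the Galerkin projection of `u` onto `K` for the energy inner product `⟨·,·⟩_y`. -/
def IsGalProj {d : ℕ} (B : Fin d → V →L[ℝ] V →L[ℝ] ℝ) (y : Fin d → ℝ)
    (K : Submodule ℝ V) (u p : V) : Prop :=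
  p ∈ K ∧ ∀ w ∈ K, aForm B y (u - p) w = 0

/-- Galerkin projection for an extended parameter `y ∈ (0,∞]^d` (the energy inner
product being restricted to the finite components of `y`). -/
def IsGalProjE {d : ℕ} (B : Fin d → V →L[ℝ] V →L[ℝ] ℝ) (y : Fin d → ℝ≥0∞)
    (K : Submodule ℝ V) (u p : V) : Prop :=
  p ∈ K ∧ ∀ w ∈ K, ∑ j, (y j).toReal * B j (u - p) w = 0

/-- The finite set of multi-indices `ν ∈ ℕ^d` of total degree `|ν| ≤ k`. -/
def mIdx (d k : ℕ) : Finset (Fin d → ℕ) :=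
  (Fintype.piFinset fun _ : Fin d => Finset.range (k+1)).filter fun ν => ∑ j, ν j ≤ k

/-- The monomial `y^ν`. -/
def mono {d : ℕ} (y : Fin d → ℝ) (ν : Fin d → ℕ) : ℝ := ∏ j, y j ^ ν j

open Set Metric Module
open scoped Topology

lemma IsOrthProj.norm_sub_le {E : Type*} [NormedAddCommGroup E] [InnerProductSpace ℝ E]
    {K : Submodule ℝ E} {u p w : E} (h : IsOrthProj K u p) (hw : w ∈ K) :
    ‖u - p‖ ≤ ‖u - w‖ := by
  have hpyth := norm_add_sq_eq_norm_sq_add_norm_sq_real (h.2 (p - w) (sub_mem h.1 hw))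
  rw [sub_add_sub_cancel] at hpyth
  exact (mul_self_le_mul_self_iff (norm_nonneg _) (norm_nonneg _)).2
    (hpyth ▸ le_add_of_nonneg_right (mul_self_nonneg _))

lemma Filter.Tendsto.exists_seq_forall_of_eventually {α : Type*} {l : Filter α} {τ : ℕ → α}
    {P : ℕ → α → Prop} (hτ : Tendsto τ atTop l) (h0 : ∀ n, P n (τ 0))
    (h : ∀ k, ∀ᶠ n in atTop, P n (τ k)) :
    ∃ ε : ℕ → α, Tendsto ε atTop l ∧ ∀ n, P n (ε n) := by
  classical
  have hN : ∀ k, ∃ N, ∀ n ≥ N, P n (τ k) := fun k => eventually_atTop.1 (h k)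
  -- `m n` is the finest tolerance admissible at `n`; `N 0 = 0` makes `m` well defined.
  let N k := Nat.find (hN k)
  let m n := Nat.findGreatest (fun k => N k ≤ n) n
  have hN0 : N 0 = 0 := (Nat.find_eq_zero (hN 0)).2 fun n _ => h0 n
  have hm : ∀ n, N (m n) ≤ n := fun n =>
    Nat.findGreatest_spec (P := fun k => N k ≤ n) (m := 0) (Nat.zero_le n)
      (by rw [hN0]; exact Nat.zero_le n)
  refine ⟨fun n => τ (m n), hτ.comp ?_, fun n => Nat.find_spec (hN (m n)) n (hm n)⟩
  refine tendsto_atTop.2 fun k => eventually_atTop.2 ⟨max k (N k), fun n hn => ?_⟩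
  exact Nat.le_findGreatest (le_of_max_le_left hn) (le_of_max_le_right hn)

section FiniteRank

variable {K E : Type*} [DivisionRing K] [AddCommGroup E] [Module K E]

lemma Submodule.exists_le_finrank_eq (hinf : ¬ FiniteDimensional K E) (W : Submodule K E)
    [FiniteDimensional K W] {n : ℕ} (hn : finrank K W ≤ n) :
    ∃ W' : Submodule K E, W ≤ W' ∧ FiniteDimensional K W' ∧ finrank K W' = n := by
  induction n, hn using Nat.le_induction with
  | base => exact ⟨W, le_rfl, inferInstance, rfl⟩
  | succ n _ ih =>
    obtain ⟨W', hWW', hW'fin, hW'n⟩ := ih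
    obtain ⟨v, hv⟩ : ∃ v, v ∉ W' := by
      by_contra! h
      exact hinf (Module.Finite.equiv (LinearEquiv.ofTop W' (Submodule.eq_top_iff'.2 h)))
    have hv0 : v ≠ 0 := fun h => hv (h ▸ W'.zero_mem)
    refine ⟨W' ⊔ K ∙ v, hWW'.trans le_sup_left, inferInstance, ?_⟩
    have := Submodule.finrank_sup_add_finrank_inf_eq W' (K ∙ v)
    rwa [(Submodule.disjoint_span_singleton_of_notMem hv).eq_bot, finrank_bot,
      finrank_span_singleton hv0, hW'n, add_zero] at this

end FiniteRank

section Widths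

variable {E : Type*} [NormedAddCommGroup E] [NormedSpace ℝ E]

lemma TotallyBounded.exists_finiteDimensional_approx {S : Set E} (hS : TotallyBounded S)
    {δ : ℝ} (hδ : 0 < δ) :
    ∃ F : Submodule ℝ E, FiniteDimensional ℝ F ∧ ∀ x ∈ S, ∃ w ∈ F, ‖x - w‖ < δ := by
  obtain ⟨t, ht, hcov⟩ := totallyBounded_iff.1 hS δ hδ
  refine ⟨Submodule.span ℝ t, FiniteDimensional.span_of_finite ℝ ht, fun x hx => ?_⟩
  obtain ⟨w, hw, hxw⟩ := mem_iUnion₂.1 (hcov hx)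
  exact ⟨w, Submodule.subset_span hw, by rwa [← dist_eq_norm]⟩

lemma TotallyBounded.exists_finrank_eq_approx (hinf : ¬ FiniteDimensional ℝ E) {S : Set E}
    (hS : TotallyBounded S) :
    ∃ (W : ℕ → Submodule ℝ E) (ε : ℕ → ℝ),
      (∀ n, FiniteDimensional ℝ (W n) ∧ finrank ℝ (W n) = n) ∧ Tendsto ε atTop (𝓝 0) ∧
        ∀ n, ∀ x ∈ S, ∃ w ∈ W n, ‖x - w‖ ≤ ε n := by
  obtain ⟨C, hC⟩ := isBounded_iff_forall_norm_le.1 hS.isBounded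
  set R := max C 1
  let P (n : ℕ) (δ : ℝ) : Prop := ∃ W : Submodule ℝ E,
    (FiniteDimensional ℝ W ∧ finrank ℝ W = n) ∧ ∀ x ∈ S, ∃ w ∈ W, ‖x - w‖ ≤ δ
  have hτ : Tendsto (fun k : ℕ => R / (k + 1 : ℕ)) atTop (𝓝 0) :=
    (tendsto_const_div_atTop_nhds_zero_nat R).comp (tendsto_add_atTop_nat 1)
  have h0 : ∀ n, P n (R / (0 + 1 : ℕ)) := fun n => by
    obtain ⟨W, -, hW⟩ := Submodule.exists_le_finrank_eq hinf ⊥ (by simp)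
    refine ⟨W, hW, fun x hx => ⟨0, W.zero_mem, ?_⟩⟩
    simpa only [sub_zero, zero_add, Nat.cast_one, div_one] using (hC x hx).trans (le_max_left C 1)
  have h : ∀ k : ℕ, ∀ᶠ n in atTop, P n (R / (k + 1 : ℕ)) := fun k => by
    obtain ⟨F, hF, hFS⟩ := hS.exists_finiteDimensional_approx (δ := R / (k + 1 : ℕ))
      (by positivity)
    refine eventually_atTop.2 ⟨finrank ℝ F, fun n hn => ?_⟩
    obtain ⟨W, hFW, hW⟩ := Submodule.exists_le_finrank_eq hinf F hn
    refine ⟨W, hW, fun x hx => ?_⟩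
    obtain ⟨w, hw, hxw⟩ := hFS x hx
    exact ⟨w, hFW hw, hxw.le⟩
  obtain ⟨ε, hε, hP⟩ := hτ.exists_seq_forall_of_eventually h0 h
  choose W hW hWS using hP
  exact ⟨W, ε, hW, hε, hWS⟩

end Widths

lemma IsCoercive.exists_forall_apply_eq {E : Type*} [NormedAddCommGroup E]
    [InnerProductSpace ℝ E] [CompleteSpace E] {A : E →L[ℝ] E →L[ℝ] ℝ} (hA : IsCoercive A)
    (g : StrongDual ℝ E) : ∃ u, ∀ w, A u w = g w :=
  ⟨hA.continuousLinearEquivOfBilin.symm ((InnerProductSpace.toDual ℝ E).symm g), fun w => by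
    rw [← hA.continuousLinearEquivOfBilin_apply, ContinuousLinearEquiv.apply_symm_apply,
      InnerProductSpace.toDual_symm_apply]⟩

section InnerSplitting

variable {E : Type*} [NormedAddCommGroup E] [InnerProductSpace ℝ E] {d : ℕ}

structure IsInnerSplitting (B : Fin d → E →L[ℝ] E →L[ℝ] ℝ) : Prop where
  symm : ∀ j v w, B j v w = B j w v
  nonneg : ∀ j v, 0 ≤ B j v v
  sum_eq_inner : ∀ v w, ∑ j, B j v w = ⟪v, w⟫_ℝ

variable {B : Fin d → E →L[ℝ] E →L[ℝ] ℝ}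

namespace IsInnerSplitting

variable (hB : IsInnerSplitting B)
include hB

lemma isSymm (j : Fin d) : (B j).toLinearMap₁₂.IsSymm :=
  LinearMap.isSymm_def.2 fun v w => hB.symm j v w

lemma eq_zero_of_apply_self_eq_zero {j : Fin d} {v : E} (h : B j v v = 0) : B j v = 0 := by
  have := (LinearMap.BilinForm.apply_apply_same_eq_zero_iff _ (hB.nonneg j) (hB.isSymm j)).1 h
  ext w
  exact LinearMap.congr_fun this w

lemma norm_sq_eq_sum (v : E) : ‖v‖ ^ 2 = ∑ j, B j v v := by
  rw [hB.sum_eq_inner, real_inner_self_eq_norm_sq]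

lemma apply_self_le_norm_sq (j : Fin d) (v : E) : B j v v ≤ ‖v‖ ^ 2 :=
  hB.norm_sq_eq_sum v ▸ Finset.single_le_sum (fun i _ => hB.nonneg i v) (Finset.mem_univ j)

lemma abs_apply_le (j : Fin d) (v w : E) : |B j v w| ≤ ‖v‖ * ‖w‖ := by
  refine abs_le_of_sq_le_sq ?_ (by positivity)
  calc B j v w ^ 2 ≤ B j v v * B j w w :=
        LinearMap.BilinForm.apply_sq_le_of_symm _ (hB.nonneg j) (hB.isSymm j) v w
    _ ≤ ‖v‖ ^ 2 * ‖w‖ ^ 2 := mul_le_mul (hB.apply_self_le_norm_sq j v)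
        (hB.apply_self_le_norm_sq j w) (hB.nonneg j w) (by positivity)
    _ = (‖v‖ * ‖w‖) ^ 2 := by ring

lemma aForm_symm (c : Fin d → ℝ) (v w : E) : aForm B c v w = aForm B c w v := by
  simp only [aForm, hB.symm _ v w]

lemma aForm_inv_nonneg {z : Fin d → ℝ} (hz : 0 ≤ z) (v : E) : 0 ≤ aForm B z⁻¹ v v :=
  Finset.sum_nonneg fun j _ => mul_nonneg (inv_nonneg.2 (hz j)) (hB.nonneg j v)

lemma apply_self_le_mul_aForm_inv {z : Fin d → ℝ} (hz : 0 ≤ z) {j : Fin d} (hzj : 0 < z j)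
    (v : E) : B j v v ≤ z j * aForm B z⁻¹ v v := by
  have : (z j)⁻¹ * B j v v ≤ aForm B z⁻¹ v v :=
    Finset.single_le_sum (f := fun i => z⁻¹ i * B i v v)
      (fun i _ => mul_nonneg (inv_nonneg.2 (hz i)) (hB.nonneg i v)) (Finset.mem_univ j)
  calc B j v v = z j * ((z j)⁻¹ * B j v v) := by field_simp
    _ ≤ z j * aForm B z⁻¹ v v := mul_le_mul_of_nonneg_left this hzj.le

lemma norm_sq_le_aForm_inv {z : Fin d → ℝ} (hz0 : 0 ≤ z) (hz1 : z ≤ 1) {v : E}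
    (hv : v ∈ VS B {j | z j = 0}) : ‖v‖ ^ 2 ≤ aForm B z⁻¹ v v := by
  rw [hB.norm_sq_eq_sum]
  refine Finset.sum_le_sum fun j _ => ?_
  rcases (hz0 j).eq_or_lt with hzj | hzj
  · simp [hv j hzj.symm]
  · rw [Pi.inv_apply]
    exact le_mul_of_one_le_left (hB.nonneg j v) ((one_le_inv₀ hzj).2 (hz1 j))

lemma aForm_inv_le_of_le {z z' : Fin d → ℝ} (hz : 0 ≤ z) (hzz' : z ≤ z') {u : E}
    (hu : u ∈ VS B {j | z j = 0}) : aForm B z'⁻¹ u u ≤ aForm B z⁻¹ u u := by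
  refine Finset.sum_le_sum fun j _ => ?_
  rcases (hz j).eq_or_lt with hzj | hzj
  · simp [hu j hzj.symm]
  · exact mul_le_mul_of_nonneg_right (inv_anti₀ hzj (hzz' j)) (hB.nonneg j u)

end IsInnerSplitting

lemma VS_anti {S T : Set (Fin d)} (hST : S ⊆ T) : VS B T ≤ VS B S :=
  fun _ hv j hj => hv j (hST hj)

lemma isClosed_VS (S : Set (Fin d)) : IsClosed (VS B S : Set E) := by
  have : (VS B S : Set E) = ⋂ j ∈ S, B j ⁻¹' {0} := by
    ext v
    simp [VS]
  exact this ▸ isClosed_biInter fun j _ => isClosed_singleton.preimage (B j).continuous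

lemma aForm_eq_apply (c : Fin d → ℝ) (v w : E) : aForm B c v w = (∑ j, c j • B j) v w := by
  simp [aForm]

end InnerSplitting

lemma cauchySeq_of_norm_sub_sq_le {E : Type*} [SeminormedAddCommGroup E] {u : ℕ → E}
    {c : ℕ → ℝ} (hc : CauchySeq c) (h : ∀ n m, n ≤ m → ‖u n - u m‖ ^ 2 ≤ c n - c m) :
    CauchySeq u := by
  refine Metric.cauchySeq_iff'.2 fun ε hε => ?_
  obtain ⟨N, hN⟩ := Metric.cauchySeq_iff'.1 hc (ε ^ 2) (by positivity)
  refine ⟨N, fun n hn => ?_⟩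
  have hcn := (abs_lt.1 (Real.dist_eq _ _ ▸ hN n hn)).1
  have hun := h N n hn
  rw [dist_eq_norm, norm_sub_rev]
  exact lt_of_pow_lt_pow_left₀ 2 hε.le (by linarith)

section StiffSolution

variable {E : Type*} [NormedAddCommGroup E] [InnerProductSpace ℝ E] {d : ℕ}
  {B : Fin d → E →L[ℝ] E →L[ℝ] ℝ} {f : E →L[ℝ] ℝ}

/-- The solution for the compliances `z j = 1 / y j`. A stiff subdomain `z j = 0` enters only
through the constraint `u ∈ V_S`: its coefficient `(z j)⁻¹` in `aForm` is Lean's `0⁻¹ = 0`. -/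
def IsStiffSol (B : Fin d → E →L[ℝ] E →L[ℝ] ℝ) (f : E →L[ℝ] ℝ) (z : Fin d → ℝ) (u : E) :
    Prop :=
  u ∈ VS B {j | z j = 0} ∧ ∀ v ∈ VS B {j | z j = 0}, aForm B z⁻¹ u v = f v

lemma VS_le_VS_of_le {z z' : Fin d → ℝ} (hz : 0 ≤ z) (hzz' : z ≤ z') :
    VS B {j | z j = 0} ≤ VS B {j | z' j = 0} :=
  VS_anti fun j hj => le_antisymm ((hzz' j).trans_eq hj) (hz j)

namespace IsStiffSol

variable {z z' : Fin d → ℝ} {u u' v : E}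

lemma aForm_sub_sub (hB : IsInnerSplitting B) (h : IsStiffSol B f z u)
    (hv : v ∈ VS B {j | z j = 0}) :
    aForm B z⁻¹ (u - v) (u - v) = f u - 2 * f v + aForm B z⁻¹ v v := by
  have huu : aForm B z⁻¹ u u = f u := h.2 u h.1
  have huv : aForm B z⁻¹ u v = f v := h.2 v hv
  have hvu : aForm B z⁻¹ v u = f v := hB.aForm_symm _ v u ▸ huv
  rw [aForm_eq_apply] at huu huv hvu ⊢
  rw [aForm_eq_apply]
  simp only [map_sub, sub_apply]
  linarith

lemma norm_sub_sq_le (hB : IsInnerSplitting B) (hz0 : 0 ≤ z) (hz1 : z ≤ 1)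
    (h : IsStiffSol B f z u) (hv : v ∈ VS B {j | z j = 0}) :
    ‖u - v‖ ^ 2 ≤ f u - 2 * f v + aForm B z⁻¹ v v :=
  (hB.norm_sq_le_aForm_inv hz0 hz1 (sub_mem h.1 hv)).trans_eq (h.aForm_sub_sub hB hv)

lemma apply_le_apply (hB : IsInnerSplitting B) (hz : 0 ≤ z) (hzz' : z ≤ z')
    (h : IsStiffSol B f z u) (h' : IsStiffSol B f z' u') : f u ≤ f u' := by
  have hexpand := h'.aForm_sub_sub hB (VS_le_VS_of_le hz hzz' h.1)
  have hpos := hB.aForm_inv_nonneg (hz.trans hzz') (u' - u)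
  have hcmp := hB.aForm_inv_le_of_le hz hzz' h.1
  have hself := h.2 u h.1
  linarith

lemma norm_sub_sq_le_sub (hB : IsInnerSplitting B) (hz : 0 ≤ z) (hzz' : z ≤ z')
    (hz'1 : z' ≤ 1) (h : IsStiffSol B f z u) (h' : IsStiffSol B f z' u') :
    ‖u' - u‖ ^ 2 ≤ f u' - f u := by
  have hnorm := h'.norm_sub_sq_le hB (hz.trans hzz') hz'1 (VS_le_VS_of_le hz hzz' h.1)
  have hcmp := hB.aForm_inv_le_of_le hz hzz' h.1
  have hself := h.2 u h.1
  linarith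

lemma unique (hB : IsInnerSplitting B) (hz0 : 0 ≤ z) (hz1 : z ≤ 1) (h : IsStiffSol B f z u)
    (h' : IsStiffSol B f z u') : u = u' := by
  have h₁ := h.norm_sub_sq_le_sub hB hz0 le_rfl hz1 h'
  have h₂ := h'.norm_sub_sq_le_sub hB hz0 le_rfl hz1 h
  rw [norm_sub_rev] at h₂
  have : ‖u' - u‖ ^ 2 = 0 := le_antisymm (by linarith) (sq_nonneg _)
  exact (sub_eq_zero.1 (norm_eq_zero.1 (pow_eq_zero_iff two_ne_zero |>.1 this))).symm

lemma smul {c : ℝ} (hc : 0 < c) (h : IsStiffSol B f z u) : IsStiffSol B f (c • z) (c • u) := by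
  have hS : {j | (c • z) j = 0} = {j | z j = 0} := by
    ext j
    simp [hc.ne']
  refine ⟨hS ▸ Submodule.smul_mem _ c h.1, fun v hv => ?_⟩
  rw [hS] at hv
  rw [← h.2 v hv]
  refine Finset.sum_congr rfl fun j _ => ?_
  simp only [Pi.inv_apply, Pi.smul_apply, smul_eq_mul, map_smul, smul_apply,
    mul_inv]
  field_simp

lemma norm_comp_subtypeL_le (hB : IsInnerSplitting B) {W : Submodule ℝ E} {j : Fin d}
    (hW : ∀ v ∈ W, ∀ i, i ≠ j → B i v = 0) (hzj : 0 < z j) (h : IsStiffSol B f z u) :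
    ‖f.comp W.subtypeL‖ ≤ (z j)⁻¹ * ‖u‖ := by
  refine ContinuousLinearMap.opNorm_le_bound _ (by positivity) fun v => ?_
  have hvS : (v : E) ∈ VS B {i | z i = 0} := fun i hi =>
    hW v v.2 i fun hij => hzj.ne' (hij ▸ hi)
  have hsum : aForm B z⁻¹ u v = (z j)⁻¹ * B j u v :=
    Finset.sum_eq_single j (fun i _ hij => by rw [hB.symm, hW v v.2 i hij]; simp) (by simp)
  calc ‖f.comp W.subtypeL v‖ = |(z j)⁻¹ * B j u v| := by
        rw [← hsum, h.2 v hvS]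
        rfl
    _ ≤ (z j)⁻¹ * (‖u‖ * ‖v‖) := by
        rw [abs_mul, abs_of_pos (inv_pos.2 hzj)]
        exact mul_le_mul_of_nonneg_left (hB.abs_apply_le j u v) (by positivity)
    _ = (z j)⁻¹ * ‖u‖ * ‖v‖ := by ring

lemma iInf_norm_comp_subtypeL_le (hB : IsInnerSplitting B) {W : Fin d → Submodule ℝ E}
    (hW : ∀ j, ∀ v ∈ W j, ∀ i, i ≠ j → B i v = 0) {j : Fin d} (hzj : z j = 1)
    (h : IsStiffSol B f z u) : ⨅ i, ‖f.comp (W i).subtypeL‖ ≤ ‖u‖ :=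
  calc ⨅ i, ‖f.comp (W i).subtypeL‖ ≤ ‖f.comp (W j).subtypeL‖ :=
        ciInf_le ⟨0, by rintro _ ⟨i, rfl⟩; positivity⟩ j
    _ ≤ ‖u‖ := by
        simpa only [hzj, inv_one, one_mul] using
          h.norm_comp_subtypeL_le hB (hW j) (hzj ▸ one_pos)

end IsStiffSol

lemma exists_isStiffSol [CompleteSpace E] (hB : IsInnerSplitting B) (f : E →L[ℝ] ℝ)
    {z : Fin d → ℝ} (hz0 : 0 ≤ z) (hz1 : z ≤ 1) : ∃ u, IsStiffSol B f z u := by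
  set K := VS B {j | z j = 0}
  have : CompleteSpace K := (isClosed_VS (B := B) _).completeSpace_coe
  let A : K →L[ℝ] K →L[ℝ] ℝ := (∑ j, z⁻¹ j • B j).bilinearComp K.subtypeL K.subtypeL
  have hA : ∀ v w : K, A v w = aForm B z⁻¹ v w := fun v w => by
    simp only [A, ContinuousLinearMap.bilinearComp_apply, Submodule.subtypeL_apply, aForm_eq_apply]
  have hAc : IsCoercive A := ⟨1, one_pos, fun v => by
    simpa [hA, ← sq] using hB.norm_sq_le_aForm_inv hz0 hz1 v.2⟩
  obtain ⟨u, hu⟩ := hAc.exists_forall_apply_eq (f.comp K.subtypeL)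
  exact ⟨u, u.2, fun v hv => (hA u ⟨v, hv⟩).symm.trans (hu ⟨v, hv⟩)⟩

def stiffSol (B : Fin d → E →L[ℝ] E →L[ℝ] ℝ) (f : E →L[ℝ] ℝ) (z : Fin d → ℝ) : E :=
  Classical.epsilon (IsStiffSol B f z)

lemma isStiffSol_stiffSol [CompleteSpace E] (hB : IsInnerSplitting B) {z : Fin d → ℝ}
    (hz0 : 0 ≤ z) (hz1 : z ≤ 1) : IsStiffSol B f z (stiffSol B f z) :=
  Classical.epsilon_spec (exists_isStiffSol hB f hz0 hz1)

end StiffSolution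

section StiffLimit

variable {d : ℕ}

def stiffSeq (z : Fin d → ℝ) (n : ℕ) : Fin d → ℝ :=
  fun j => if z j = 0 then ((n : ℝ) + 1)⁻¹ else z j

variable {z : Fin d → ℝ}

lemma stiffSeq_pos (hz : 0 ≤ z) (n : ℕ) (j : Fin d) : 0 < stiffSeq z n j := by
  unfold stiffSeq
  split_ifs with hj
  · positivity
  · exact (hz j).lt_of_ne' hj

lemma le_stiffSeq (n : ℕ) : z ≤ stiffSeq z n := fun j => by
  unfold stiffSeq
  split_ifs with hj
  · rw [hj]
    positivity
  · rfl

lemma stiffSeq_le_one (hz : z ≤ 1) (n : ℕ) : stiffSeq z n ≤ 1 := fun j => by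
  unfold stiffSeq
  split_ifs
  · exact inv_le_one_of_one_le₀ (by linarith [n.cast_nonneg (α := ℝ)])
  · exact hz j

lemma stiffSeq_anti : Antitone (stiffSeq z) := fun n m hnm j => by
  unfold stiffSeq
  split_ifs
  · gcongr
  · rfl

variable {E : Type*} [NormedAddCommGroup E] [InnerProductSpace ℝ E]
  {B : Fin d → E →L[ℝ] E →L[ℝ] ℝ} {f : E →L[ℝ] ℝ}

lemma isStiffSol_of_tendsto_stiffSeq (hB : IsInnerSplitting B) (hz : 0 ≤ z) {u : ℕ → E} {v : E}
    (hu : ∀ n, IsStiffSol B f (stiffSeq z n) (u n)) (hlim : Tendsto u atTop (𝓝 v)) :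
    IsStiffSol B f z v := by
  have hnonneg n : 0 ≤ stiffSeq z n := fun j => (stiffSeq_pos hz n j).le
  have hB_lim j {w : ℕ → E} {w₀ : E} (hw : Tendsto w atTop (𝓝 w₀)) :
      Tendsto (fun n => B j (u n) (w n)) atTop (𝓝 (B j v w₀)) :=
    ((B j).continuous₂.tendsto (v, w₀)).comp (hlim.prodMk_nhds hw)
  constructor
  · intro j hj
    refine hB.eq_zero_of_apply_self_eq_zero (le_antisymm ?_ (hB.nonneg j v))
    have hbound n : B j (u n) (u n) ≤ ((n : ℝ) + 1)⁻¹ * f (u 0) := by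
      have hsj : stiffSeq z n j = ((n : ℝ) + 1)⁻¹ := if_pos hj
      calc B j (u n) (u n) ≤ stiffSeq z n j * aForm B (stiffSeq z n)⁻¹ (u n) (u n) :=
            hB.apply_self_le_mul_aForm_inv (hnonneg n) (stiffSeq_pos hz n j) (u n)
        _ = ((n : ℝ) + 1)⁻¹ * f (u n) := by rw [hsj, (hu n).2 _ (hu n).1]
        _ ≤ ((n : ℝ) + 1)⁻¹ * f (u 0) := by
            gcongr
            exact (hu n).apply_le_apply hB (hnonneg n) (stiffSeq_anti n.zero_le) (hu 0)
    have hzero : Tendsto (fun n : ℕ => ((n : ℝ) + 1)⁻¹ * f (u 0)) atTop (𝓝 0) := by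
      simpa using (tendsto_one_div_add_atTop_nhds_zero_nat).mul_const (f (u 0))
    exact le_of_tendsto_of_tendsto' (hB_lim j hlim) hzero hbound
  · intro w hw
    have heq n : aForm B z⁻¹ (u n) w = f w := by
      rw [← (hu n).2 w (VS_le_VS_of_le hz (le_stiffSeq n) hw)]
      refine Finset.sum_congr rfl fun j _ => ?_
      by_cases hj : z j = 0
      · simp [hB.symm j (u n) w, hw j hj]
      · simp [stiffSeq, hj]
    have hlim' : Tendsto (fun n => aForm B z⁻¹ (u n) w) atTop (𝓝 (aForm B z⁻¹ v w)) :=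
      tendsto_finsetSum _ fun j _ => (hB_lim j tendsto_const_nhds).const_mul _
    exact tendsto_nhds_unique (hlim'.congr heq) tendsto_const_nhds

lemma IsStiffSol.tendsto_stiffSeq [CompleteSpace E] (hB : IsInnerSplitting B) (hz0 : 0 ≤ z)
    (hz1 : z ≤ 1) {u : ℕ → E} {u₀ : E} (hu : ∀ n, IsStiffSol B f (stiffSeq z n) (u n))
    (h : IsStiffSol B f z u₀) : Tendsto u atTop (𝓝 u₀) := by
  have hnonneg n : 0 ≤ stiffSeq z n := fun j => (stiffSeq_pos hz0 n j).le
  have hanti : Antitone fun n => f (u n) := fun n m hnm =>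
    (hu m).apply_le_apply hB (hnonneg m) (stiffSeq_anti hnm) (hu n)
  have hbdd : BddBelow (range fun n => f (u n)) :=
    ⟨f u₀, forall_mem_range.2 fun n => h.apply_le_apply hB hz0 (le_stiffSeq n) (hu n)⟩
  have hcauchy : CauchySeq u :=
    cauchySeq_of_norm_sub_sq_le (tendsto_atTop_ciInf hanti hbdd).cauchySeq fun n m hnm =>
      (hu m).norm_sub_sq_le_sub hB (hnonneg m) (stiffSeq_anti hnm) (stiffSeq_le_one hz1 n) (hu n)
  obtain ⟨v, hv⟩ := cauchySeq_tendsto_of_complete hcauchy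
  rwa [(isStiffSol_of_tendsto_stiffSeq hB hz0 hu hv).unique hB hz0 hz1 h] at hv

lemma IsStiffSol.eventually_apply_le [CompleteSpace E] (hB : IsInnerSplitting B) (hz0 : 0 ≤ z)
    (hz1 : z ≤ 1) {u₀ : E} (h : IsStiffSol B f z u₀) {ε : ℝ} (hε : 0 < ε) :
    ∀ᶠ z' in 𝓝 z, ∀ u, 0 ≤ z' → IsStiffSol B f z' u → f u ≤ f u₀ + ε := by
  have hu n := isStiffSol_stiffSol (f := f) hB (fun j => (stiffSeq_pos hz0 n j).le)
    (stiffSeq_le_one hz1 n)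
  obtain ⟨n, hn⟩ := (((f.continuous.tendsto u₀).comp (h.tendsto_stiffSeq hB hz0 hz1 hu)).eventually
    (gt_mem_nhds (lt_add_of_pos_right (f u₀) hε))).exists
  set s := stiffSeq z n
  set u := stiffSol B f s
  obtain ⟨t, hts, ht⟩ : ∃ t, t * f u < f u₀ + ε ∧ 1 < t := by
    have : Tendsto (fun t => t * f u) (𝓝[>] 1) (𝓝 (f u)) := by
      simpa using ((continuous_mul_const (f u)).tendsto 1).mono_left nhdsWithin_le_nhds
    exact ((this.eventually (gt_mem_nhds hn)).and self_mem_nhdsWithin).exists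
  -- near `z`, every parameter is dominated by `t • s`, whose solution is `t • u`
  have hlt j : z j < (t • s) j :=
    (le_stiffSeq n j).trans_lt (lt_mul_left (stiffSeq_pos hz0 n j) ht)
  filter_upwards [eventually_all.2 fun j =>
    ((continuous_apply j).tendsto z).eventually (gt_mem_nhds (hlt j))] with z' hz' u' hz'0 hu'
  calc f u' ≤ f (t • u) :=
        hu'.apply_le_apply hB hz'0 (fun j => (hz' j).le) ((hu n).smul (by linarith))
    _ = t * f u := by simp
    _ ≤ f u₀ + ε := hts.le

end StiffLimit

section Continuity

variable {E : Type*} [NormedAddCommGroup E] [InnerProductSpace ℝ E] {d : ℕ}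
  {B : Fin d → E →L[ℝ] E →L[ℝ] ℝ} {f : E →L[ℝ] ℝ} {z : Fin d → ℝ}

lemma tendsto_aForm_inv_self {v : E} (hv : v ∈ VS B {j | z j = 0}) :
    Tendsto (fun z' => aForm B z'⁻¹ v v) (𝓝 z) (𝓝 (aForm B z⁻¹ v v)) := by
  refine tendsto_finsetSum _ fun j _ => ?_
  by_cases hj : z j = 0
  · simp [hv j hj]
  · exact (((continuous_apply j).tendsto z).inv₀ hj).mul_const _

lemma eventually_VS_le : ∀ᶠ z' in 𝓝 z, VS B {j | z j = 0} ≤ VS B {j | z' j = 0} := by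
  have : ∀ᶠ z' in 𝓝 z, ∀ j, z j ≠ 0 → z' j ≠ 0 := eventually_all.2 fun j => by
    by_cases hj : z j = 0
    · simp [hj]
    · exact (((continuous_apply j).tendsto z).eventually_ne hj).mono fun _ h _ => h
  exact this.mono fun z' hz' => VS_anti fun j hj => by_contra fun h => hz' j h hj

lemma continuousOn_stiffSol [CompleteSpace E] (hB : IsInnerSplitting B) (f : E →L[ℝ] ℝ) :
    ContinuousOn (stiffSol B f) (Icc 0 1) := by
  rintro z ⟨hz0, hz1⟩
  set u₀ := stiffSol B f z
  have h₀ : IsStiffSol B f z u₀ := isStiffSol_stiffSol hB hz0 hz1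
  refine Metric.tendsto_nhds.2 fun ε hε => ?_
  have hA : ∀ᶠ z' in 𝓝 z, aForm B z'⁻¹ u₀ u₀ < f u₀ + ε ^ 2 / 2 :=
    (tendsto_aForm_inv_self h₀.1).eventually
      (gt_mem_nhds (h₀.2 u₀ h₀.1 ▸ lt_add_of_pos_right _ (by positivity)))
  filter_upwards [self_mem_nhdsWithin, nhdsWithin_le_nhds (eventually_VS_le (B := B)),
    nhdsWithin_le_nhds hA,
    nhdsWithin_le_nhds (h₀.eventually_apply_le hB hz0 hz1 (ε := ε ^ 2 / 2) (by positivity))]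
    with z' ⟨hz'0, hz'1⟩ hVS hAz' hfz'
  have h' := isStiffSol_stiffSol (f := f) hB hz'0 hz'1
  have := h'.norm_sub_sq_le hB hz'0 hz'1 (hVS h₀.1)
  have := hfz' _ hz'0 h'
  rw [dist_eq_norm]
  exact lt_of_pow_lt_pow_left₀ 2 hε.le (by linarith)

end Continuity

section Rescaling

variable {E : Type*} [NormedAddCommGroup E] [InnerProductSpace ℝ E] {d : ℕ}
  {B : Fin d → E →L[ℝ] E →L[ℝ] ℝ} {f : E →L[ℝ] ℝ} {y : Fin d → ℝ≥0∞} {u : E}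

lemma IsSolE.eq_zero_of_forall_eq_top (hB : IsInnerSplitting B) (hu : IsSolE B f y u)
    (h : ∀ j, y j = ∞) : u = 0 := by
  have : ‖u‖ ^ 2 = 0 := by
    rw [hB.norm_sq_eq_sum]
    exact Finset.sum_eq_zero fun j _ => by rw [hu.1 j (h j)]; rfl
  simpa using this

-- With `c / ∞.toReal = c / 0 = 0`, the infinite entries become exactly the stiff ones.
lemma IsSolE.isStiffSol_smul (hy : ∀ j, 0 < y j) (hu : IsSolE B f y u) {c : ℝ} (hc : 0 < c) :
    IsStiffSol B f (fun j => c / (y j).toReal) (c • u) := by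
  have hS : {j | c / (y j).toReal = 0} = {j | y j = ∞} := by
    ext j
    simp [hc.ne', ENNReal.toReal_eq_zero_iff, (hy j).ne']
  refine ⟨hS ▸ Submodule.smul_mem _ c hu.1, fun v hv => ?_⟩
  rw [hS] at hv
  rw [← hu.2 v hv]
  refine Finset.sum_congr rfl fun j _ => ?_
  simp only [Pi.inv_apply, inv_div, map_smul, smul_apply, smul_eq_mul]
  field_simp

lemma IsSolE.exists_isStiffSol_smul (hy : ∀ j, 0 < y j) (hu : IsSolE B f y u)
    (hfin : ∃ j, y j ≠ ∞) :
    ∃ c : ℝ, 0 < c ∧ ∃ z ∈ Icc (0 : Fin d → ℝ) 1, (∃ j, z j = 1) ∧ IsStiffSol B f z (c • u) := by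
  obtain ⟨j₁, hj₁⟩ := hfin
  have : Nonempty (Fin d) := ⟨j₁⟩
  obtain ⟨j₀, hmin⟩ := Finite.exists_min y
  have hj₀ : y j₀ ≠ ∞ := ne_top_of_le_ne_top hj₁ (hmin j₁)
  have hc : 0 < (y j₀).toReal := ENNReal.toReal_pos (hy j₀).ne' hj₀
  refine ⟨_, hc, fun j => (y j₀).toReal / (y j).toReal, ⟨fun j => by positivity, fun j => ?_⟩,
    ⟨j₀, div_self hc.ne'⟩, hu.isStiffSol_smul hy hc⟩
  by_cases hj : y j = ∞
  · simp [hj]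
  · exact div_le_one_of_le₀ (ENNReal.toReal_mono hj (hmin j)) ENNReal.toReal_nonneg

end Rescaling

lemma isCompact_Icc_inter_exists_eq_one (d : ℕ) :
    IsCompact (Icc (0 : Fin d → ℝ) 1 ∩ {z | ∃ j, z j = 1}) := by
  refine isCompact_Icc.inter_right ?_
  rw [Set.ofPred_exists fun j (z : Fin d → ℝ) => z j = 1]
  exact isClosed_iUnion_of_finite fun j => isClosed_eq (continuous_apply j) continuous_const

theorem statement4_general
    {V : Type*} [NormedAddCommGroup V] [InnerProductSpace ℝ V] [CompleteSpace V]
    {d : ℕ}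
    (B : Fin d → V →L[ℝ] V →L[ℝ] ℝ)
    (hsymm : ∀ (j : Fin d) (v w : V), B j v w = B j w v)
    (hnonneg : ∀ (j : Fin d) (v : V), 0 ≤ B j v v)
    (hsum : ∀ v w : V, ∑ j, B j v w = ⟪v, w⟫_ℝ)
    (f : V →L[ℝ] ℝ)
    (Wloc : Fin d → Submodule ℝ V)
    (hWloc : ∀ j : Fin d, ∀ v ∈ Wloc j, ∀ i : Fin d, i ≠ j → B i v = 0)
    (hcf : 0 < ⨅ j : Fin d, ‖f.comp (Wloc j).subtypeL‖)
    (hinf : ¬ FiniteDimensional ℝ V) :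
    ∃ (Vn : ℕ → Submodule ℝ V) (ε : ℕ → ℝ),
      (∀ n, FiniteDimensional ℝ (Vn n) ∧ Module.finrank ℝ (Vn n) = n) ∧
      Tendsto ε atTop (nhds 0) ∧
      ∀ (n : ℕ) (y : Fin d → ℝ≥0∞), (∀ j, 0 < y j) →
        ∀ u : V, IsSolE B f y u → ∀ p : V, IsOrthProj (Vn n) u p →
          ‖u - p‖ ≤ ε n * ‖u‖ := by
  have hB : IsInnerSplitting B := ⟨hsymm, hnonneg, hsum⟩
  set c := ⨅ j, ‖f.comp (Wloc j).subtypeL‖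
  have hK : IsCompact (stiffSol B f '' (Icc 0 1 ∩ {z | ∃ j, z j = 1})) :=
    (isCompact_Icc_inter_exists_eq_one d).image_of_continuousOn
      ((continuousOn_stiffSol hB f).mono inter_subset_left)
  obtain ⟨W, ε, hW, hε, happrox⟩ := hK.totallyBounded.exists_finrank_eq_approx hinf
  refine ⟨W, fun n => ε n / c, hW, by simpa using hε.div_const c, fun n y hy u hu p hp => ?_⟩
  by_cases hfin : ∀ j, y j = ∞
  · simpa [hu.eq_zero_of_forall_eq_top hB hfin] using hp.norm_sub_le (W n).zero_mem
  obtain ⟨t, ht, z, hz, ⟨j, hzj⟩, hsol⟩ := hu.exists_isStiffSol_smul hy (not_forall.1 hfin)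
  have hcu : c ≤ t * ‖u‖ := by
    simpa only [norm_smul, Real.norm_of_nonneg ht.le] using
      hsol.iInf_norm_comp_subtypeL_le hB hWloc hzj
  obtain ⟨w, hw, hdist⟩ := happrox n (t • u)
    ⟨z, ⟨hz, j, hzj⟩, (hsol.unique hB hz.1 hz.2 (isStiffSol_stiffSol hB hz.1 hz.2)).symm⟩
  calc ‖u - p‖ ≤ ‖u - t⁻¹ • w‖ := hp.norm_sub_le (Submodule.smul_mem _ _ hw)
    _ = t⁻¹ * ‖t • u - w‖ := by
        rw [show u - t⁻¹ • w = t⁻¹ • (t • u - w) by rw [smul_sub, inv_smul_smul₀ ht.ne'],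
          norm_smul, Real.norm_of_nonneg (inv_nonneg.2 ht.le)]
    _ ≤ t⁻¹ * ε n := by gcongr
    _ ≤ ε n / c * ‖u‖ := by
        have := (norm_nonneg _).trans hdist
        rw [div_mul_eq_mul_div, le_div_iff₀ hcf]
        calc t⁻¹ * ε n * c ≤ t⁻¹ * ε n * (t * ‖u‖) := by gcongr
          _ = ε n * ‖u‖ := by field_simp

/-- Theorem 2.5: under `c_f > 0` there exist `n`-dimensional reduced
spaces `V_n` achieving uniform approximation in relative error over all of `(0,∞]^d`. -/
theorem statement4
    {V : Type*} [NormedAddCommGroup V] [InnerProductSpace ℝ V] [CompleteSpace V]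
    {d : ℕ}
    (hd : 0 < d)
    (B : Fin d → V →L[ℝ] V →L[ℝ] ℝ)
    (hsymm : ∀ (j : Fin d) (v w : V), B j v w = B j w v)
    (hnonneg : ∀ (j : Fin d) (v : V), 0 ≤ B j v v)
    (hsum : ∀ v w : V, ∑ j, B j v w = ⟪v, w⟫_ℝ)
    (f : V →L[ℝ] ℝ)
    (Wloc : Fin d → Submodule ℝ V)
    (hWloc : ∀ j : Fin d, ∀ v ∈ Wloc j, ∀ i : Fin d, i ≠ j → B i v = 0)
    (hcf : 0 < ⨅ j : Fin d, ‖f.comp (Wloc j).subtypeL‖)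
    (hinf : ¬ FiniteDimensional ℝ V) :
    ∃ (Vn : ℕ → Submodule ℝ V) (ε : ℕ → ℝ),
      (∀ n, FiniteDimensional ℝ (Vn n) ∧ Module.finrank ℝ (Vn n) = n) ∧
      Tendsto ε atTop (nhds 0) ∧
      ∀ (n : ℕ) (y : Fin d → ℝ≥0∞), (∀ j, 0 < y j) →
        ∀ u : V, IsSolE B f y u → ∀ p : V, IsOrthProj (Vn n) u p →
          ‖u - p‖ ≤ ε n * ‖u‖ :=
  statement4_general B hsymm hnonneg hsum f Wloc hWloc hcf hinf

end
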